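/- Let q ∈ (0,2) with q ≠ 1, let ρ and σ be positive definite 2×2 density matrices, let λ_ρ be the largest eigenvalue of ρ and α_σ the smallest eigenvalue of σ, and assume α_σ < λ_ρ. Then the Tsallis relative q-entropy satisfies S_q(ρ‖σ) ≤ (1/(1−q)) · ‖ρ−σ‖₁ · λ_ρ^q · (λ_ρ^{1−q} − α_σ^{1−q})/(λ_ρ − α_σ) ≤ ‖ρ−σ‖₁ · λ_ρ^q / α_σ^q. -/

import Mathlib

open Matrix ComplexOrder

/-- The trace norm of a complex matrix: the sum of its singular values,
realized as `Tr √(Aᴴ A)`. -/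
noncomputable def traceNorm {d : ℕ} (A : Matrix (Fin d) (Fin d) ℂ) : ℝ :=
  (((Matrix.posSemidef_conjTranspose_mul_self A).1.eigenvectorUnitary : Matrix (Fin d) (Fin d) ℂ) *
      Matrix.diagonal (((↑) : ℝ → ℂ) ∘ (Real.sqrt ·) ∘ (Matrix.posSemidef_conjTranspose_mul_self A).1.eigenvalues) *
      (star (Matrix.posSemidef_conjTranspose_mul_self A).1.eigenvectorUnitary :
        Matrix (Fin d) (Fin d) ℂ)).trace.re

/-- Functional calculus for a Hermitian matrix: apply `f` to the eigenvalues in an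
orthonormal eigenbasis. -/
noncomputable def matFun {d : ℕ} {A : Matrix (Fin d) (Fin d) ℂ} (hA : A.IsHermitian)
    (f : ℝ → ℝ) : Matrix (Fin d) (Fin d) ℂ :=
  (hA.eigenvectorUnitary : Matrix (Fin d) (Fin d) ℂ) *
    Matrix.diagonal (fun i => (f (hA.eigenvalues i) : ℂ)) *
    (star hA.eigenvectorUnitary : Matrix (Fin d) (Fin d) ℂ)

/-- `f : (0,∞) → ℝ` is operator monotone decreasing: for all positive definite matrices
`A ≤ B` (Loewner order) of any size, `f(B) ≤ f(A)`. -/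
def OpMonoDecrOn (f : ℝ → ℝ) : Prop :=
  ∀ (n : ℕ) (A B : Matrix (Fin n) (Fin n) ℂ) (hA : A.PosDef) (hB : B.PosDef),
    (B - A).PosSemidef → (matFun hA.1 f - matFun hB.1 f).PosSemidef

/-- The quasi-relative entropy `S_f(ρ‖σ) = Σ_{j,k} λ_j f(μ_k/λ_j) |⟨φ_k|ψ_j⟩|²` computed from
spectral decompositions `ρ = Σ_j λ_j |ψ_j⟩⟨ψ_j|`, `σ = Σ_k μ_k |φ_k⟩⟨φ_k|`. -/
noncomputable def quasiRelEntropy {d : ℕ} (f : ℝ → ℝ) {ρ σ : Matrix (Fin d) (Fin d) ℂ}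
    (hρ : ρ.IsHermitian) (hσ : σ.IsHermitian) : ℝ :=
  ∑ j, ∑ k, hρ.eigenvalues j * f (hσ.eigenvalues k / hρ.eigenvalues j) *
    ‖(inner ℂ (hσ.eigenvectorBasis k) (hρ.eigenvectorBasis j) : ℂ)‖ ^ 2

/-- The Umegaki relative entropy `S(ρ‖σ) = Tr(ρ (log ρ − log σ))`. -/
noncomputable def relEntropy {d : ℕ} {ρ σ : Matrix (Fin d) (Fin d) ℂ}
    (hρ : ρ.IsHermitian) (hσ : σ.IsHermitian) : ℝ :=
  ((ρ * (matFun hρ Real.log - matFun hσ Real.log)).trace).re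

/-- The Tsallis relative q-entropy `S_q(ρ‖σ) = (1/(1−q))(1 − Tr(ρ^q σ^{1−q}))`. -/
noncomputable def tsallisEntropy {d : ℕ} (q : ℝ) {ρ σ : Matrix (Fin d) (Fin d) ℂ}
    (hρ : ρ.IsHermitian) (hσ : σ.IsHermitian) : ℝ :=
  (1 / (1 - q)) *
    (1 - ((matFun hρ (fun x => x ^ q) * matFun hσ (fun x => x ^ (1 - q))).trace).re)

/-!
Write `ρ = ∑ⱼ aⱼ |uⱼ⟩⟨uⱼ|`, `σ = ∑ₖ bₖ |vₖ⟩⟨vₖ|` and `cⱼₖ = |⟨uⱼ, vₖ⟩|²`. Since `Tr ρ = 1`,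
`S_q(ρ‖σ) = ∑ cⱼₖ aⱼ^q (ln_q aⱼ − ln_q bₖ)`, and by homogeneity each summand is
`cⱼₖ (aⱼ − bₖ)` times the slope of `ln_q` between `bₖ / aⱼ` and `1`. The `q`-logarithm is concave,
so when `aⱼ > bₖ` this slope is at most the slope `K` at `α_σ / λ_ρ ≤ bₖ / aⱼ`; hence
`S_q(ρ‖σ) ≤ K ∑ cⱼₖ |aⱼ − bₖ|`, and `K` is at most the derivative
`(α_σ / λ_ρ)^(-q) = λ_ρ^q / α_σ^q`.
For qubits `∑ cⱼₖ |aⱼ − bₖ| ≤ ‖ρ − σ‖₁`: by Cauchy–Schwarz with `∑ cⱼₖ = 2`, its square is at most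
`2 ∑ cⱼₖ (aⱼ − bₖ)² = 2 Tr (ρ − σ)²`, which equals `‖ρ − σ‖₁²` since `ρ − σ` is traceless.
-/

section

variable {d : ℕ} {A B : Matrix (Fin d) (Fin d) ℂ}

lemma matFun_eq_cfc (hA : A.IsHermitian) (f : ℝ → ℝ) : matFun hA f = cfc f A := by
  rw [hA.cfc_eq, IsHermitian.cfc, Unitary.conjStarAlgAut_apply]; rfl

lemma matFun_id (hA : A.IsHermitian) : matFun hA (fun x => x) = A := by
  rw [matFun_eq_cfc, cfc_id' ℝ A]

lemma matFun_one (hA : A.IsHermitian) : matFun hA (fun _ => 1) = 1 := by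
  rw [matFun_eq_cfc, cfc_const_one ℝ A]

lemma matFun_mul_self (hA : A.IsHermitian) : matFun hA (fun x => x * x) = A * A := by
  rw [matFun_eq_cfc, cfc_mul (fun x : ℝ => x) (fun x : ℝ => x) A, cfc_id' ℝ A]

lemma trace_matFun (hA : A.IsHermitian) (f : ℝ → ℝ) :
    (matFun hA f).trace = ((∑ i, f (hA.eigenvalues i) : ℝ) : ℂ) := by
  rw [matFun, trace_mul_cycle, Unitary.star_mul_self_of_mem hA.eigenvectorUnitary.2, one_mul,
    trace_diagonal, Complex.ofReal_sum]

lemma traceNorm_nonneg (A : Matrix (Fin d) (Fin d) ℂ) : 0 ≤ traceNorm A := by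
  change 0 ≤ (matFun (posSemidef_conjTranspose_mul_self A).1 Real.sqrt).trace.re
  rw [trace_matFun, Complex.ofReal_re]
  exact Finset.sum_nonneg fun i _ => Real.sqrt_nonneg _

lemma traceNorm_eq_sum_abs_eigenvalues (hA : A.IsHermitian) :
    traceNorm A = ∑ i, |hA.eigenvalues i| := by
  change (matFun (posSemidef_conjTranspose_mul_self A).1 Real.sqrt).trace.re = _
  have hsq : Aᴴ * A = cfc (fun x : ℝ => x * x) A := by
    rw [hA.eq, ← matFun_mul_self hA, matFun_eq_cfc]
  rw [matFun_eq_cfc, hsq, ← cfc_comp Real.sqrt (fun x : ℝ => x * x) A, ← matFun_eq_cfc hA,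
    trace_matFun, Complex.ofReal_re]
  simp only [Function.comp_apply, Real.sqrt_mul_self_eq_abs]

lemma traceNorm_sq_of_trace_eq_zero {D : Matrix (Fin 2) (Fin 2) ℂ} (hD : D.IsHermitian)
    (h0 : D.trace = 0) : traceNorm D ^ 2 = 2 * (D * D).trace.re := by
  have hsum : hD.eigenvalues 0 + hD.eigenvalues 1 = 0 := by
    have h := hD.trace_eq_sum_eigenvalues
    rw [h0, Fin.sum_univ_two] at h
    simpa using congrArg Complex.re h.symm
  rw [traceNorm_eq_sum_abs_eigenvalues hD, ← matFun_mul_self hD, trace_matFun, Fin.sum_univ_two,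
    Fin.sum_univ_two, eq_neg_of_add_eq_zero_right hsum, abs_neg, Complex.ofReal_re]
  nlinarith [sq_abs (hD.eigenvalues 0)]

/-- `|⟨uⱼ, vₖ⟩|²` for the orthonormal eigenbases `u` of `A` and `v` of `B`, the columns of their
eigenvector unitaries. -/
noncomputable def eigenOverlap (hA : A.IsHermitian) (hB : B.IsHermitian) (j k : Fin d) : ℝ :=
  ‖((star hA.eigenvectorUnitary : Matrix (Fin d) (Fin d) ℂ) * hB.eigenvectorUnitary) j k‖ ^ 2

lemma eigenOverlap_nonneg (hA : A.IsHermitian) (hB : B.IsHermitian) (j k : Fin d) :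
    0 ≤ eigenOverlap hA hB j k :=
  sq_nonneg _

lemma trace_matFun_mul_matFun (hA : A.IsHermitian) (hB : B.IsHermitian) (f g : ℝ → ℝ) :
    (matFun hA f * matFun hB g).trace =
      ((∑ j, ∑ k, f (hA.eigenvalues j) * g (hB.eigenvalues k) * eigenOverlap hA hB j k : ℝ) :
        ℂ) := by
  set U : Matrix (Fin d) (Fin d) ℂ := (hA.eigenvectorUnitary : Matrix (Fin d) (Fin d) ℂ)
  set V : Matrix (Fin d) (Fin d) ℂ := (hB.eigenvectorUnitary : Matrix (Fin d) (Fin d) ℂ)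
  have hcycle : (matFun hA f * matFun hB g).trace =
      (diagonal (fun j => (f (hA.eigenvalues j) : ℂ)) * (star U * V) *
        diagonal (fun k => (g (hB.eigenvalues k) : ℂ)) * star (star U * V)).trace := by
    simp only [matFun, star_mul, star_star, Matrix.mul_assoc]
    rw [← trace_mul_comm]
    simp only [Matrix.mul_assoc]
    rfl
  rw [hcycle, trace]
  push_cast
  refine Finset.sum_congr rfl fun j _ => ?_
  rw [diag_apply, mul_apply]
  refine Finset.sum_congr rfl fun k _ => ?_
  rw [mul_diagonal, diagonal_mul, star_apply, eigenOverlap, RCLike.star_def]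
  push_cast
  rw [← Complex.mul_conj']
  ring

lemma trace_eq_sum_eigenOverlap (hA : A.IsHermitian) (hB : B.IsHermitian) :
    A.trace = ((∑ j, ∑ k, hA.eigenvalues j * eigenOverlap hA hB j k : ℝ) : ℂ) := by
  simpa [matFun_id, matFun_one] using trace_matFun_mul_matFun hA hB (fun x => x) (fun _ => 1)

lemma sum_eigenOverlap (hA : A.IsHermitian) (hB : B.IsHermitian) :
    ∑ j, ∑ k, eigenOverlap hA hB j k = d := by
  have h := trace_matFun_mul_matFun hA hB (fun _ => 1) (fun _ => 1)
  simp only [matFun_one, one_mul, trace_one, Fintype.card_fin] at h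
  exact_mod_cast h.symm

lemma trace_mul_eq_sum_eigenOverlap (hA : A.IsHermitian) (hB : B.IsHermitian) :
    (A * B).trace =
      ((∑ j, ∑ k, hA.eigenvalues j * hB.eigenvalues k * eigenOverlap hA hB j k : ℝ) : ℂ) := by
  simpa [matFun_id] using trace_matFun_mul_matFun hA hB (fun x => x) (fun x => x)

lemma trace_sub_mul_sub_eq_sum_eigenOverlap (hA : A.IsHermitian) (hB : B.IsHermitian) :
    ((A - B) * (A - B)).trace =
      ((∑ j, ∑ k, (hA.eigenvalues j - hB.eigenvalues k) ^ 2 * eigenOverlap hA hB j k : ℝ) : ℂ) := by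
  have hAA := trace_matFun_mul_matFun hA hB (fun x => x * x) (fun _ => 1)
  have hBB := trace_matFun_mul_matFun hA hB (fun _ => 1) (fun x => x * x)
  rw [matFun_mul_self, matFun_one, mul_one] at hAA
  rw [matFun_mul_self, matFun_one, one_mul] at hBB
  rw [sub_mul, mul_sub, mul_sub, trace_sub, trace_sub, trace_sub, trace_mul_comm B A, hAA, hBB,
    trace_mul_eq_sum_eigenOverlap hA hB]
  push_cast
  simp only [← Finset.sum_sub_distrib]
  refine Finset.sum_congr rfl fun j _ => Finset.sum_congr rfl fun k _ => ?_
  ring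

lemma sum_eigenOverlap_mul_abs_sub_le_traceNorm {A B : Matrix (Fin 2) (Fin 2) ℂ}
    (hA : A.IsHermitian) (hB : B.IsHermitian) (htr : A.trace = B.trace) :
    ∑ j, ∑ k, eigenOverlap hA hB j k * |hA.eigenvalues j - hB.eigenvalues k| ≤
      traceNorm (A - B) := by
  have hcs : (∑ j, ∑ k, eigenOverlap hA hB j k * |hA.eigenvalues j - hB.eigenvalues k|) ^ 2 ≤
      (∑ j, ∑ k, eigenOverlap hA hB j k) *
        ∑ j, ∑ k, (hA.eigenvalues j - hB.eigenvalues k) ^ 2 * eigenOverlap hA hB j k := by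
    simp only [← Fintype.sum_prod_type']
    refine Finset.sum_sq_le_sum_mul_sum_of_sq_le_mul _ (fun _ _ => eigenOverlap_nonneg hA hB _ _)
      (fun _ _ => mul_nonneg (sq_nonneg _) (eigenOverlap_nonneg hA hB _ _)) fun _ _ => ?_
    rw [mul_pow, sq_abs]
    exact (by ring : _ = _).le
  have hsq : traceNorm (A - B) ^ 2 =
      2 * ∑ j, ∑ k, (hA.eigenvalues j - hB.eigenvalues k) ^ 2 * eigenOverlap hA hB j k := by
    rw [traceNorm_sq_of_trace_eq_zero (hA.sub hB) (by rw [trace_sub, htr, sub_self]),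
      trace_sub_mul_sub_eq_sum_eigenOverlap hA hB, Complex.ofReal_re]
  rw [sum_eigenOverlap, Nat.cast_ofNat, ← hsq] at hcs
  exact abs_le_of_sq_le_sq' hcs (traceNorm_nonneg _) |>.2

end

/-- The Tsallis `q`-logarithm `ln_q`. -/
noncomputable def qLog (q t : ℝ) : ℝ := (t ^ (1 - q) - 1) / (1 - q)

section

open Set

variable {q : ℝ}

lemma hasDerivAt_qLog (hq : q ≠ 1) {t : ℝ} (ht : 0 < t) : HasDerivAt (qLog q) (t ^ (-q)) t := by
  have h :=
    ((Real.hasDerivAt_rpow_const (p := 1 - q) (Or.inl ht.ne')).sub_const 1).div_const (1 - q)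
  rwa [show 1 - q - 1 = -q by ring, mul_div_cancel_left₀ _ (sub_ne_zero.2 hq.symm)] at h

lemma concaveOn_qLog (hq0 : 0 < q) (hq1 : q ≠ 1) : ConcaveOn ℝ (Ioi 0) (qLog q) := by
  refine AntitoneOn.concaveOn_of_deriv (convex_Ioi 0)
    (fun t ht => (hasDerivAt_qLog hq1 ht).continuousAt.continuousWithinAt) ?_ ?_ <;>
    rw [interior_Ioi]
  · exact fun t ht => (hasDerivAt_qLog hq1 ht).differentiableAt.differentiableWithinAt
  · intro s hs t ht hst
    rw [(hasDerivAt_qLog hq1 hs).deriv, (hasDerivAt_qLog hq1 ht).deriv]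
    exact Real.rpow_le_rpow_of_nonpos hs hst (by linarith)

lemma monotoneOn_qLog (hq : q ≠ 1) : MonotoneOn (qLog q) (Ioi 0) := by
  refine monotoneOn_of_hasDerivWithinAt_nonneg (convex_Ioi 0)
    (fun t ht => (hasDerivAt_qLog hq ht).continuousAt.continuousWithinAt)
    (fun t ht => (hasDerivAt_qLog hq ?_).hasDerivWithinAt) fun t ht => ?_ <;>
    rw [interior_Ioi] at ht
  · exact ht
  · exact (Real.rpow_pos_of_pos ht _).le

lemma rpow_mul_sub_qLog {x y : ℝ} (hx : 0 < x) (hy : 0 < y) :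
    x ^ q * (qLog q x - qLog q y) = (x - y) * slope (qLog q) (y / x) 1 := by
  rcases eq_or_ne y x with rfl | hyx
  · simp
  have hxq : x ^ q * x ^ (1 - q) = x := by
    rw [← Real.rpow_add hx, add_sub_cancel, Real.rpow_one]
  simp only [slope_def_field, qLog, Real.one_rpow, Real.div_rpow hy.le hx.le]
  field_simp
  rw [hxq]
  ring

lemma slope_qLog_div {α L : ℝ} (hα : 0 < α) (hαL : α < L) :
    slope (qLog q) (α / L) 1 = 1 / (1 - q) * L ^ q * ((L ^ (1 - q) - α ^ (1 - q)) / (L - α)) := by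
  have hLα : L - α ≠ 0 := (sub_pos.2 hαL).ne'
  rw [← mul_right_inj' hLα, ← rpow_mul_sub_qLog (hα.trans hαL) hα, qLog, qLog]
  field_simp
  ring

lemma slope_qLog_nonneg (hq : q ≠ 1) {t : ℝ} (ht : 0 < t) : 0 ≤ slope (qLog q) t 1 :=
  (monotoneOn_qLog hq).slope_nonneg (mem_Ioi.2 ht) (mem_Ioi.2 one_pos)

lemma rpow_mul_sub_qLog_le (hq0 : 0 < q) (hq1 : q ≠ 1) {x y α L : ℝ} (hx : 0 < x) (hα : 0 < α)
    (hαy : α ≤ y) (hxL : x ≤ L) (hαL : α < L) :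
    x ^ q * (qLog q x - qLog q y) ≤ |x - y| * slope (qLog q) (α / L) 1 := by
  have hy : 0 < y := hα.trans_le hαy
  have hL : 0 < L := hα.trans hαL
  rw [rpow_mul_sub_qLog hx hy]
  rcases le_or_gt x y with hxy | hyx
  · calc (x - y) * slope (qLog q) (y / x) 1 ≤ 0 :=
          mul_nonpos_of_nonpos_of_nonneg (sub_nonpos.2 hxy) (slope_qLog_nonneg hq1 (div_pos hy hx))
      _ ≤ _ := mul_nonneg (abs_nonneg _) (slope_qLog_nonneg hq1 (div_pos hα hL))
  rw [abs_of_pos (sub_pos.2 hyx), slope_comm, slope_comm _ (α / L)]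
  gcongr
  refine (concaveOn_qLog hq0 hq1).slope_anti (mem_Ioi.2 one_pos) ⟨mem_Ioi.2 (div_pos hα hL), ?_⟩
    ⟨mem_Ioi.2 (div_pos hy hx), ?_⟩ (div_le_div₀ hy.le hαy hx hxL)
  · exact ((div_lt_one hL).2 hαL).ne
  · exact ((div_lt_one hx).2 hyx).ne

lemma slope_qLog_le_rpow (hq0 : 0 < q) (hq1 : q ≠ 1) {w : ℝ} (hw0 : 0 < w) (hw1 : w < 1) :
    slope (qLog q) w 1 ≤ w ^ (-q) :=
  (concaveOn_qLog hq0 hq1).slope_le_of_hasDerivAt hw0 (mem_Ioi.2 one_pos) hw1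
    (hasDerivAt_qLog hq1 hw0)

end

lemma tsallisEntropy_eq_sum_eigenOverlap {d : ℕ} (q : ℝ) {ρ σ : Matrix (Fin d) (Fin d) ℂ}
    (hρ : ρ.PosSemidef) (hσ : σ.IsHermitian) (htr : ρ.trace = 1) :
    tsallisEntropy q hρ.1 hσ = ∑ j, ∑ k, eigenOverlap hρ.1 hσ j k *
      (hρ.1.eigenvalues j ^ q * (qLog q (hρ.1.eigenvalues j) - qLog q (hσ.eigenvalues k))) := by
  have hone : ∑ j, ∑ k, hρ.1.eigenvalues j * eigenOverlap hρ.1 hσ j k = 1 := by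
    have h := trace_eq_sum_eigenOverlap hρ.1 hσ
    rw [htr] at h
    exact_mod_cast h.symm
  have hterm : ∀ j k, eigenOverlap hρ.1 hσ j k *
      (hρ.1.eigenvalues j ^ q * (qLog q (hρ.1.eigenvalues j) - qLog q (hσ.eigenvalues k))) =
      1 / (1 - q) * (hρ.1.eigenvalues j * eigenOverlap hρ.1 hσ j k -
        hρ.1.eigenvalues j ^ q * hσ.eigenvalues k ^ (1 - q) * eigenOverlap hρ.1 hσ j k) := by
    intro j k
    have hsplit : hρ.1.eigenvalues j ^ q * hρ.1.eigenvalues j ^ (1 - q) = hρ.1.eigenvalues j := by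
      rw [← Real.rpow_add' (hρ.eigenvalues_nonneg j) (by simp), add_sub_cancel, Real.rpow_one]
    rw [qLog, qLog]
    linear_combination eigenOverlap hρ.1 hσ j k / (1 - q) * hsplit
  calc tsallisEntropy q hρ.1 hσ
      = 1 / (1 - q) * (∑ j, ∑ k, hρ.1.eigenvalues j * eigenOverlap hρ.1 hσ j k -
          ∑ j, ∑ k, hρ.1.eigenvalues j ^ q * hσ.eigenvalues k ^ (1 - q) *
            eigenOverlap hρ.1 hσ j k) := by
        rw [tsallisEntropy, trace_matFun_mul_matFun, Complex.ofReal_re, hone]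
    _ = _ := by simp only [hterm, ← Finset.sum_sub_distrib, Finset.mul_sum]

lemma tsallisEntropy_le_sum_eigenOverlap_mul_slope_qLog {d : ℕ} {q : ℝ} (hq0 : 0 < q)
    (hq1 : q ≠ 1) {ρ σ : Matrix (Fin d) (Fin d) ℂ} (hρ : ρ.PosDef) (hσ : σ.IsHermitian)
    (htr : ρ.trace = 1) {α L : ℝ} (hα : 0 < α) (hαL : α < L)
    (hρL : ∀ j, hρ.1.eigenvalues j ≤ L) (hσα : ∀ k, α ≤ hσ.eigenvalues k) :
    tsallisEntropy q hρ.1 hσ ≤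
      (∑ j, ∑ k, eigenOverlap hρ.1 hσ j k * |hρ.1.eigenvalues j - hσ.eigenvalues k|) *
        slope (qLog q) (α / L) 1 := by
  rw [tsallisEntropy_eq_sum_eigenOverlap q hρ.posSemidef hσ htr, Finset.sum_mul]
  refine Finset.sum_le_sum fun j _ => ?_
  rw [Finset.sum_mul]
  refine Finset.sum_le_sum fun k _ => ?_
  rw [mul_assoc]
  exact mul_le_mul_of_nonneg_left (rpow_mul_sub_qLog_le hq0 hq1 (hρ.eigenvalues_pos j) hα
    (hσα k) (hρL j) hαL) (eigenOverlap_nonneg _ _ _ _)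

/-- upper bound on the Tsallis relative q-entropy for qubits, `q ∈ (0,2)`,
`q ≠ 1`. -/
theorem tsallisEntropy_le_of_qubits (q : ℝ) (hq : q ∈ Set.Ioo (0 : ℝ) 2) (hq1 : q ≠ 1)
    (ρ σ : Matrix (Fin 2) (Fin 2) ℂ) (hρ : ρ.PosDef) (hσ : σ.PosDef)
    (hρtr : ρ.trace = 1) (hσtr : σ.trace = 1)
    (lρ aσ : ℝ)
    (hl : IsGreatest (Set.range hρ.1.eigenvalues) lρ)
    (haσ : IsLeast (Set.range hσ.1.eigenvalues) aσ)
    (hlt : aσ < lρ) :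
    tsallisEntropy q hρ.1 hσ.1 ≤
        (1 / (1 - q)) * traceNorm (ρ - σ) * lρ ^ q *
          ((lρ ^ (1 - q) - aσ ^ (1 - q)) / (lρ - aσ)) ∧
      (1 / (1 - q)) * traceNorm (ρ - σ) * lρ ^ q *
          ((lρ ^ (1 - q) - aσ ^ (1 - q)) / (lρ - aσ)) ≤
        traceNorm (ρ - σ) * lρ ^ q / aσ ^ q := by
  have hα : 0 < aσ := by
    obtain ⟨k, rfl⟩ := haσ.1
    exact hσ.eigenvalues_pos k
  have hL : 0 < lρ := hα.trans hlt
  have hw : 0 < aσ / lρ := div_pos hα hL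
  have hmiddle : (1 / (1 - q)) * traceNorm (ρ - σ) * lρ ^ q *
      ((lρ ^ (1 - q) - aσ ^ (1 - q)) / (lρ - aσ)) =
      traceNorm (ρ - σ) * slope (qLog q) (aσ / lρ) 1 := by
    rw [slope_qLog_div hα hlt]
    ring
  rw [hmiddle]
  constructor
  · calc tsallisEntropy q hρ.1 hσ.1
        ≤ (∑ j, ∑ k, eigenOverlap hρ.1 hσ.1 j k * |hρ.1.eigenvalues j - hσ.1.eigenvalues k|) *
            slope (qLog q) (aσ / lρ) 1 :=
          tsallisEntropy_le_sum_eigenOverlap_mul_slope_qLog hq.1 hq1 hρ hσ.1 hρtr hα hlt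
            (fun j => hl.2 ⟨j, rfl⟩) (fun k => haσ.2 ⟨k, rfl⟩)
      _ ≤ traceNorm (ρ - σ) * slope (qLog q) (aσ / lρ) 1 :=
          mul_le_mul_of_nonneg_right
            (sum_eigenOverlap_mul_abs_sub_le_traceNorm hρ.1 hσ.1 (hρtr.trans hσtr.symm))
            (slope_qLog_nonneg hq1 hw)
  · calc traceNorm (ρ - σ) * slope (qLog q) (aσ / lρ) 1
        ≤ traceNorm (ρ - σ) * (aσ / lρ) ^ (-q) :=
          mul_le_mul_of_nonneg_left (slope_qLog_le_rpow hq.1 hq1 hw ((div_lt_one hL).2 hlt))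
            (traceNorm_nonneg _)
      _ = traceNorm (ρ - σ) * lρ ^ q / aσ ^ q := by
          rw [Real.rpow_neg hw.le, Real.div_rpow hα.le hL.le, inv_div, mul_div_assoc]
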